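/- Let d ≥ 1 be an integer, k > 0, and let f₀, f₁ : (0,∞) → ℂ be differentiable and f₂ : (0,∞) → ℂ a function such that f₀'(z) = −f₁(z), f₁'(z) = f₁(z)/z − f₂(z), and d·f₁(z)/z = f₀(z) + f₂(z) for all z > 0. Fix y ∈ ℝ^d and define u(x) := f₀(k|x−y|). Then u satisfies the Helmholtz equation away from y: for every x ≠ y, Δu(x) + k² u(x) = 0, where Δu := Σ_{i=1}^d ∂_{x_i}∂_{x_i} u. -/

import Mathlib

/-!
For a radial function `g (‖x - y‖)` one has `∂ᵢ (g ∘ r) = g'(r) ωᵢ` with `ωᵢ = (xᵢ - yᵢ)/r`, and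
`∂ᵢ² (g ∘ r) = g''(r) ωᵢ² + g'(r)/r (1 - ωᵢ²)`; since `∑ ωᵢ² = 1`, the Laplacian is
`g'' + (d - 1) g'/r`. For `g(r) = f₀(kr)` the recurrences give `g' = -k f₁(kr)` and
`g'' = -k² (f₁(z)/z - f₂(z))` with `z = kr`, so `Δu = -k² (d f₁(z)/z - f₂(z)) = -k² f₀(z)`.
-/

/-- Partial derivative ∂_i of a complex-valued function on ℝ^d. -/
noncomputable def pd {d : ℕ} (i : Fin d) (f : EuclideanSpace ℝ (Fin d) → ℂ) :
    EuclideanSpace ℝ (Fin d) → ℂ :=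
  fun x => fderiv ℝ f x (EuclideanSpace.single i 1)

/-- Second partial derivative ∂_i ∂_j. -/
noncomputable def pd2 {d : ℕ} (i j : Fin d) (f : EuclideanSpace ℝ (Fin d) → ℂ) :
    EuclideanSpace ℝ (Fin d) → ℂ :=
  pd i (pd j f)

open scoped Topology

theorem HasDerivAt.comp_const_mul {𝕜 F : Type*} [NontriviallyNormedField 𝕜]
    [NormedAddCommGroup F] [NormedSpace 𝕜 F] {f : 𝕜 → F} {f' : F} {c t : 𝕜}
    (hf : HasDerivAt f f' (c * t)) : HasDerivAt (fun t => f (c * t)) (c • f') t := by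
  simpa [Function.comp_def] using hf.scomp t ((hasDerivAt_id t).const_mul c)

section InnerProductSpace

variable {E : Type*} [NormedAddCommGroup E] [InnerProductSpace ℝ E] {x y : E}

theorem hasFDerivAt_norm_sub (hxy : x ≠ y) :
    HasFDerivAt (fun w => ‖w - y‖) (‖x - y‖⁻¹ • innerSL ℝ (x - y)) x := by
  have hr : ‖x - y‖ ≠ 0 := (norm_sub_pos_iff.2 hxy).ne'
  have hsq : HasFDerivAt (fun w => ‖w - y‖ ^ 2) (2 • innerSL ℝ (x - y)) x := by
    simpa using ((hasFDerivAt_id x).sub_const y).norm_sq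
  have hsqrt := (Real.hasDerivAt_sqrt (pow_ne_zero 2 hr)).comp_hasFDerivAt x hsq
  simp only [Function.comp_def, Real.sqrt_sq (norm_nonneg _)] at hsqrt
  refine hsqrt.congr_fderiv ?_
  ext v
  simp only [smul_apply, coe_innerSL_apply, smul_eq_mul, nsmul_eq_mul, Nat.cast_ofNat]
  field_simp

theorem hasFDerivAt_comp_norm_sub {g : ℝ → ℂ} {g' : ℂ} (hxy : x ≠ y)
    (hg : HasDerivAt g g' ‖x - y‖) :
    HasFDerivAt (fun w => g ‖w - y‖)
      ((ContinuousLinearMap.smulRight (1 : ℝ →L[ℝ] ℝ) g').comp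
        (‖x - y‖⁻¹ • innerSL ℝ (x - y))) x :=
  hg.hasFDerivAt.comp x (hasFDerivAt_norm_sub hxy)

end InnerProductSpace

section EuclideanSpace

variable {d : ℕ} {x y : EuclideanSpace ℝ (Fin d)}

theorem pd_mul {f g : EuclideanSpace ℝ (Fin d) → ℂ} (hf : DifferentiableAt ℝ f x)
    (hg : DifferentiableAt ℝ g x) (i : Fin d) :
    pd i (fun w => f w * g w) x = pd i f x * g x + f x * pd i g x := by
  rw [pd, pd, pd, show (fun w => f w * g w) = f * g from rfl, fderiv_mul hf hg]
  simp only [add_apply, smul_apply, smul_eq_mul]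
  ring

theorem hasFDerivAt_coord_sub (i : Fin d) :
    HasFDerivAt (fun w : EuclideanSpace ℝ (Fin d) => ((w i - y i : ℝ) : ℂ))
      (Complex.ofRealCLM.comp (EuclideanSpace.proj i)) x := by
  have hsub := ((EuclideanSpace.proj (𝕜 := ℝ) i).hasFDerivAt (x := x)).sub_const (y i)
  exact Complex.ofRealCLM.hasFDerivAt.comp x hsub

theorem pd_coord_sub (i : Fin d) :
    pd i (fun w : EuclideanSpace ℝ (Fin d) => ((w i - y i : ℝ) : ℂ)) x = 1 := by
  rw [pd, (hasFDerivAt_coord_sub i).fderiv]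
  simp

theorem pd_comp_norm_sub {g : ℝ → ℂ} {g' : ℂ} (hxy : x ≠ y) (hg : HasDerivAt g g' ‖x - y‖)
    (i : Fin d) :
    pd i (fun w => g ‖w - y‖) x = g' / ‖x - y‖ * (x i - y i : ℝ) := by
  rw [pd, (hasFDerivAt_comp_norm_sub hxy hg).fderiv]
  simp only [ContinuousLinearMap.comp_apply, smul_apply, coe_innerSL_apply,
    EuclideanSpace.inner_single_right, ContinuousLinearMap.smulRight_apply,
    one_apply_eq_self, conj_trivial, smul_eq_mul, one_mul, PiLp.sub_apply, Complex.real_smul]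
  push_cast
  ring

theorem pd_comp_norm_sub_eventuallyEq {g g' : ℝ → ℂ} (hxy : x ≠ y)
    (hg : ∀ t > 0, HasDerivAt g (g' t) t) (i : Fin d) :
    pd i (fun w => g ‖w - y‖) =ᶠ[𝓝 x]
      fun w => g' ‖w - y‖ / ‖w - y‖ * ((w i - y i : ℝ) : ℂ) := by
  filter_upwards [isOpen_ne.mem_nhds hxy] with w hw
  exact pd_comp_norm_sub hw (hg _ (norm_sub_pos_iff.2 hw)) i

theorem pd2_comp_norm_sub {g g' : ℝ → ℂ} {g'' : ℂ} (hxy : x ≠ y)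
    (hg : ∀ t > 0, HasDerivAt g (g' t) t) (hg' : HasDerivAt g' g'' ‖x - y‖) (i : Fin d) :
    pd2 i i (fun w => g ‖w - y‖) x =
      g'' * ((x i - y i) / ‖x - y‖ : ℝ) ^ 2
        + g' ‖x - y‖ / ‖x - y‖ * (1 - ((x i - y i) / ‖x - y‖ : ℝ) ^ 2) := by
  have hr : (‖x - y‖ : ℂ) ≠ 0 := Complex.ofReal_ne_zero.2 (norm_sub_pos_iff.2 hxy).ne'
  have hh : HasDerivAt (fun t => g' t / t)
      ((g'' * ‖x - y‖ - g' ‖x - y‖ * 1) / (‖x - y‖ : ℂ) ^ 2) ‖x - y‖ :=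
    hg'.div (hasDerivAt_id _).ofReal_comp hr
  rw [pd2, pd, (pd_comp_norm_sub_eventuallyEq hxy hg i).fderiv_eq, ← pd,
    pd_mul (hasFDerivAt_comp_norm_sub hxy hh).differentiableAt
      (hasFDerivAt_coord_sub i).differentiableAt,
    pd_comp_norm_sub hxy hh, pd_coord_sub]
  push_cast
  field_simp
  ring

theorem sum_pd2_comp_norm_sub {g g' : ℝ → ℂ} {g'' : ℂ} (hxy : x ≠ y)
    (hg : ∀ t > 0, HasDerivAt g (g' t) t) (hg' : HasDerivAt g' g'' ‖x - y‖) :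
    ∑ i, pd2 i i (fun w => g ‖w - y‖) x = g'' + (d - 1) * (g' ‖x - y‖ / ‖x - y‖) := by
  have hr : ‖x - y‖ ^ 2 ≠ 0 := pow_ne_zero 2 (norm_sub_pos_iff.2 hxy).ne'
  have hsum : ∑ i, (((x i - y i) / ‖x - y‖ : ℝ) : ℂ) ^ 2 = 1 := by
    have : ∑ i, ((x i - y i) / ‖x - y‖) ^ 2 = 1 := by
      simp_rw [div_pow, ← Finset.sum_div, div_eq_one_iff_eq hr, EuclideanSpace.norm_sq_eq,
        PiLp.sub_apply, Real.norm_eq_abs, sq_abs]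
    exact_mod_cast this
  simp only [pd2_comp_norm_sub hxy hg hg', Finset.sum_add_distrib, ← Finset.mul_sum,
    Finset.sum_sub_distrib, hsum, Finset.sum_const, Finset.card_univ, Fintype.card_fin,
    nsmul_eq_mul]
  ring

end EuclideanSpace

theorem radial_wave_satisfies_helmholtz_general
    (d : ℕ) (k : ℝ) (hk : 0 < k)
    (f0 f1 : ℝ → ℂ) (f2 : ℝ → ℂ)
    (hf0 : ∀ z : ℝ, 0 < z → HasDerivAt f0 (-(f1 z)) z)
    (hf1 : ∀ z : ℝ, 0 < z → HasDerivAt f1 (f1 z / (z : ℂ) - f2 z) z)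
    (hrec : ∀ z : ℝ, 0 < z → (d : ℂ) * f1 z / (z : ℂ) = f0 z + f2 z)
    (y : EuclideanSpace ℝ (Fin d))
    (u : EuclideanSpace ℝ (Fin d) → ℂ)
    (hu : ∀ x, u x = f0 (k * ‖x - y‖)) :
    ∀ x : EuclideanSpace ℝ (Fin d), x ≠ y →
      (∑ i : Fin d, pd2 i i u x) + ((k ^ 2 : ℝ) : ℂ) * u x = 0 := by
  intro x hxy
  have hz : 0 < k * ‖x - y‖ := mul_pos hk (norm_sub_pos_iff.2 hxy)
  have hg : ∀ t > 0, HasDerivAt (fun t => f0 (k * t)) (k • -f1 (k * t)) t :=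
    fun t ht => (hf0 _ (mul_pos hk ht)).comp_const_mul
  have hg' := ((hf1 _ hz).comp_const_mul.fun_neg).fun_const_smul k
  have hk0 : (k : ℂ) ≠ 0 := Complex.ofReal_ne_zero.2 hk.ne'
  have hr0 : (‖x - y‖ : ℂ) ≠ 0 := Complex.ofReal_ne_zero.2 (norm_sub_pos_iff.2 hxy).ne'
  rw [hu x, funext hu, sum_pd2_comp_norm_sub hxy hg hg', eq_sub_of_add_eq (hrec _ hz).symm]
  simp only [Complex.real_smul]
  push_cast
  field_simp
  ring

/-- `u(x) = f₀(k|x−y|)` satisfies the Helmholtz equation `Δu + k²u = 0` away from `y`,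
provided `f₀, f₁, f₂` satisfy the Hankel-type recurrences. -/
theorem radial_wave_satisfies_helmholtz
    (d : ℕ) (hd : 1 ≤ d) (k : ℝ) (hk : 0 < k)
    (f0 f1 : ℝ → ℂ) (f2 : ℝ → ℂ)
    (hf0 : ∀ z : ℝ, 0 < z → HasDerivAt f0 (-(f1 z)) z)
    (hf1 : ∀ z : ℝ, 0 < z → HasDerivAt f1 (f1 z / (z : ℂ) - f2 z) z)
    (hrec : ∀ z : ℝ, 0 < z → (d : ℂ) * f1 z / (z : ℂ) = f0 z + f2 z)
    (y : EuclideanSpace ℝ (Fin d))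
    (u : EuclideanSpace ℝ (Fin d) → ℂ)
    (hu : ∀ x, u x = f0 (k * ‖x - y‖)) :
    ∀ x : EuclideanSpace ℝ (Fin d), x ≠ y →
      (∑ i : Fin d, pd2 i i u x) + ((k ^ 2 : ℝ) : ℂ) * u x = 0 :=
  radial_wave_satisfies_helmholtz_general d k hk f0 f1 f2 hf0 hf1 hrec y u hu
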